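/- Let K(x) = √(2π)·x^{x+1}/(e^x · Γ(x+3/2)) for x > 0. Then K(x) → 1 as x → ∞, and moreover K(x-1)/K(x) = 1 + O(x^{-2}) as x → ∞. -/

import Mathlib

open Filter Asymptotics

/-- `K(x) = √(2π)·x^{x+1}/(e^x·Γ(x+3/2))`. -/
noncomputable def Kfun (x : ℝ) : ℝ :=
  Real.sqrt (2 * Real.pi) * x ^ (x + 1) / (Real.exp x * Real.Gamma (x + 3 / 2))

section Aux
open Real Set

lemma d_tendsto : Tendsto (fun n : ℕ => Real.log n.factorial - ((n:ℝ) + 1/2) * Real.log n + n)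
    atTop (nhds ((1/2) * Real.log (2*Real.pi))) := by
  have h := Stirling.tendsto_stirlingSeq_sqrt_pi
  have hlog : Tendsto (fun n => Real.log (Stirling.stirlingSeq n)) atTop
      (nhds (Real.log (Real.sqrt Real.pi))) :=
    ((Real.continuousAt_log (by positivity)).tendsto).comp h
  have key : ∀ᶠ n : ℕ in atTop, Real.log (Stirling.stirlingSeq n) + (1/2) * Real.log 2
      = Real.log n.factorial - ((n:ℝ) + 1/2) * Real.log n + n := by
    filter_upwards [eventually_ge_atTop 1] with n hn
    have hn0 : (0:ℝ) < (n:ℝ) := by exact_mod_cast hn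
    rw [Stirling.log_stirlingSeq_formula, Real.log_mul (by norm_num) hn0.ne',
      Real.log_div hn0.ne' (Real.exp_ne_zero 1), Real.log_exp]
    ring
  have := (hlog.add_const ((1/2) * Real.log 2)).congr' key
  convert this using 2
  rw [Real.log_sqrt Real.pi_pos.le, Real.log_mul (by norm_num) Real.pi_ne_zero]
  ring

lemma gamma_interp (m : ℕ) {x : ℝ} (h1 : (m:ℝ) + 2 ≤ x) (h2 : x < (m:ℝ) + 3) :
    Real.log (m+1).factorial + (x - ((m:ℝ)+2)) * Real.log ((m:ℝ)+1) ≤ Real.log (Real.Gamma x) ∧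
    Real.log (Real.Gamma x) ≤ Real.log (m+1).factorial + (x - ((m:ℝ)+2)) * Real.log ((m:ℝ)+2) := by
  have hconv := Real.convexOn_log_Gamma
  have hm1 : ((m:ℝ)+1) ∈ Ioi (0:ℝ) := by simp; positivity
  have hm2 : ((m:ℝ)+2) ∈ Ioi (0:ℝ) := by simp; positivity
  have hm3 : ((m:ℝ)+3) ∈ Ioi (0:ℝ) := by simp; positivity
  have hfm1 : (Real.log ∘ Real.Gamma) ((m:ℝ)+1) = Real.log m.factorial := by
    simp [Function.comp]
    rw [show ((m:ℝ)+1) = ((m:ℕ):ℝ) + 1 by norm_num, Real.Gamma_nat_eq_factorial]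
  have hfm2 : (Real.log ∘ Real.Gamma) ((m:ℝ)+2) = Real.log (m+1).factorial := by
    simp [Function.comp]
    rw [show ((m:ℝ)+2) = ((m+1:ℕ):ℝ) + 1 by push_cast; ring, Real.Gamma_nat_eq_factorial]
  have hfm3 : (Real.log ∘ Real.Gamma) ((m:ℝ)+3) = Real.log (m+2).factorial := by
    simp [Function.comp]
    rw [show ((m:ℝ)+3) = ((m+2:ℕ):ℝ) + 1 by push_cast; ring, Real.Gamma_nat_eq_factorial]
  rcases eq_or_lt_of_le h1 with heq | hlt
  · constructor
    · rw [← heq]; rw [← hfm2]; simp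
    · rw [← heq]; rw [← hfm2]; simp
  constructor
  · -- lower bound via slope_mono_adjacent on m+1 < m+2 < x
    have hs := hconv.slope_mono_adjacent hm1 (by simp; linarith : x ∈ Ioi (0:ℝ))
      (by linarith : (m:ℝ)+1 < (m:ℝ)+2) hlt
    rw [hfm1, hfm2] at hs
    have hfac : Real.log (m+1).factorial - Real.log m.factorial = Real.log ((m:ℝ)+1) := by
      rw [← Real.log_div (by positivity) (by positivity)]
      congr 1
      rw [Nat.factorial_succ]
      push_cast
      field_simp
    rw [show ((m:ℝ)+2) - ((m:ℝ)+1) = 1 by ring, div_one, hfac] at hs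
    have hxpos : 0 < x - ((m:ℝ)+2) := by linarith
    have := (le_div_iff₀ hxpos).mp hs
    simp only [Function.comp] at this
    nlinarith
  · -- upper bound via convexity: x = (1-s)(m+2) + s(m+3)
    set s := x - ((m:ℝ)+2) with hsdef
    have hs0 : 0 ≤ s := by linarith
    have hs1 : s < 1 := by simp [hsdef]; linarith
    have hcomb := hconv.2 hm2 hm3 (by linarith : (0:ℝ) ≤ 1 - s) hs0 (by ring)
    have hx : (1-s) • ((m:ℝ)+2) + s • ((m:ℝ)+3) = x := by simp [smul_eq_mul]; ring
    rw [hx, hfm2, hfm3] at hcomb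
    have hfac : Real.log (m+2).factorial = Real.log (m+1).factorial + Real.log ((m:ℝ)+2) := by
      rw [← Real.log_mul (by positivity) (by positivity)]
      congr 1
      rw [show m + 2 = (m+1) + 1 by ring, Nat.factorial_succ]
      push_cast; ring
    simp only [smul_eq_mul] at hcomb
    calc Real.log (Real.Gamma x) ≤ (1-s) * Real.log (m+1).factorial + s * Real.log (m+2).factorial := hcomb
    _ = Real.log (m+1).factorial + s * Real.log ((m:ℝ)+2) := by rw [hfac]; ring

set_option maxHeartbeats 1600000 in
lemma key_est (n F G : ℝ) {x : ℝ} (hn4 : 4 ≤ n) (hx1 : n + 1 ≤ x) (hx2 : x < n + 2)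
    (hlow : F + (x - (n+1)) * Real.log n ≤ G)
    (hupp : G ≤ F + (x - (n+1)) * Real.log (n+1)) :
    |(G - ((x - 1/2) * Real.log x - x)) - (F - (n + 1/2) * Real.log n + n)| ≤ 25 / n := by
  obtain ⟨s, rfl⟩ : ∃ s, x = n + 1 + s := ⟨x - (n+1), by ring⟩
  rw [show n+1+s - (n+1) = s by ring] at hlow hupp
  have hnpos : (0:ℝ) < n := by linarith
  have hs0 : (0:ℝ) ≤ s := by linarith
  have hs1 : s < 1 := by linarith
  obtain ⟨t, ht⟩ : ∃ t, t = (1 + s) / n := ⟨_, rfl⟩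
  have ht0 : 0 ≤ t := by rw [ht]; positivity
  have hnt : n * t = 1 + s := by rw [ht]; field_simp
  have ht2 : t ≤ 2 / n := by rw [ht, div_le_div_iff₀ hnpos hnpos]; nlinarith
  have ht05 : t ≤ 1/2 := by
    calc t ≤ 2/n := ht2
    _ ≤ 1/2 := by rw [div_le_div_iff₀ hnpos (by norm_num : (0:ℝ) < 2)]; linarith
  have hxeq : n + 1 + s = n * (1 + t) := by rw [mul_add, mul_one, hnt]; ring
  have h1t : (0:ℝ) < 1 + t := by linarith
  have hbx : Real.log (n + 1 + s) = Real.log n + Real.log (1 + t) := by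
    rw [hxeq, Real.log_mul hnpos.ne' h1t.ne']
  have hA : Real.log (1 + t) ≤ t := by
    have := Real.log_le_sub_one_of_pos h1t; linarith
  have hB : t - t^2 / (1 - t) ≤ Real.log (1 + t) := by
    have habs := Real.abs_log_sub_add_sum_range_le (x := -t)
      (by rw [abs_neg, abs_of_nonneg ht0]; linarith) 1
    rw [abs_neg, abs_of_nonneg ht0] at habs
    have h1 := (abs_le.mp habs).1
    simp only [Finset.sum_range_one] at h1
    norm_num at h1
    linarith
  have hC : Real.log (n + 1) ≤ Real.log n + 1 / n := by
    have he : n + 1 = n * (1 + 1/n) := by field_simp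
    rw [he, Real.log_mul hnpos.ne' (by positivity)]
    have := Real.log_le_sub_one_of_pos (show (0:ℝ) < 1 + 1/n by positivity)
    linarith
  have hD : t^2 / (1 - t) ≤ 2 * t^2 := by
    rw [div_le_iff₀ (by linarith : (0:ℝ) < 1 - t)]
    nlinarith
  have hfpos : (0:ℝ) < n + s + 1/2 := by linarith
  have hi1 : -((n+s+1/2)*t) ≤ (n+s+1/2) * (Real.log n - Real.log (n+1+s)) := by
    rw [hbx]
    have := mul_le_mul_of_nonneg_left hA hfpos.le
    nlinarith
  have hi2 : (n+s+1/2) * (Real.log n - Real.log (n+1+s)) ≤ -((n+s+1/2)*t) + (n+s+1/2)*(2*t^2) := by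
    rw [hbx]
    have h1 : t - 2*t^2 ≤ Real.log (1+t) := by linarith
    have := mul_le_mul_of_nonneg_left h1 hfpos.le
    nlinarith
  have hid : G - ((n+1+s - 1/2) * Real.log (n+1+s) - (n+1+s)) - (F - (n + 1/2) * Real.log n + n)
      = (G - F - s * Real.log n) + (n+s+1/2) * (Real.log n - Real.log (n+1+s)) + (1+s) := by
    ring
  have hlow' : 0 ≤ G - F - s * Real.log n := by linarith
  have hupp' : G - F - s * Real.log n ≤ 1/n := by
    have hsn : s * Real.log (n+1) ≤ s * Real.log n + s * (1/n) := by
      have h := mul_le_mul_of_nonneg_left hC hs0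
      rw [mul_add] at h
      linarith
    have hs1n : s * (1/n) ≤ 1/n := by
      have := mul_le_mul_of_nonneg_right hs1.le (show (0:ℝ) ≤ 1/n by positivity)
      linarith
    nlinarith
  have hprod : (s+1/2)*t ≤ 3/n := by
    have h : t*(s+1/2) ≤ (2/n)*(3/2) :=
      mul_le_mul ht2 (by linarith) (by linarith) (by positivity)
    calc (s+1/2)*t = t*(s+1/2) := by ring
    _ ≤ (2/n)*(3/2) := h
    _ = 3/n := by ring
  have hexp : -((n+s+1/2)*t) = -(1+s) - (s+1/2)*t := by linear_combination -hnt
  have hsq : t^2 ≤ 4/n^2 := by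
    have : t*t ≤ (2/n)*(2/n) := mul_le_mul ht2 ht2 ht0 (by positivity)
    calc t^2 = t*t := sq t
    _ ≤ (2/n)*(2/n) := this
    _ = 4/n^2 := by ring
  have hcube : (n+s+1/2)*(2*t^2) ≤ 24/n := by
    have hb : (n+s+1/2) ≤ 3*n := by linarith
    have h2 : 2*t^2 ≤ 2*(4/n^2) := by linarith
    have h : (n+s+1/2)*(2*t^2) ≤ 3*n*(2*(4/n^2)) := mul_le_mul hb h2 (by positivity) (by positivity)
    have he : 3*n*(2*(4/n^2)) = 24/n := by field_simp; ring
    linarith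
  rw [abs_le]
  constructor
  · rw [hid]
    have h3 : 3/n ≤ 25/n := by rw [div_le_div_iff₀ hnpos hnpos]; nlinarith
    linarith [hi1, hexp ▸ hi1]
  · rw [hid]
    have h124 : 1/n + 24/n = 25/n := by ring
    have hprod0 : 0 ≤ (s+1/2)*t := mul_nonneg (by linarith) ht0
    linarith [hi2, hexp, hprod0, hupp', hcube]

lemma E_tendsto : Tendsto (fun x : ℝ => Real.log (Real.Gamma x) - ((x - 1/2) * Real.log x - x))
    atTop (nhds ((1/2) * Real.log (2*Real.pi))) := by
  rw [Metric.tendsto_nhds]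
  intro ε hε
  obtain ⟨N, hN⟩ := (Metric.tendsto_atTop.mp d_tendsto) (ε/2) (by linarith)
  rw [eventually_atTop]
  refine ⟨max ((N:ℝ) + 5) (max 6 (50/ε + 3)), fun x hx => ?_⟩
  have hx6 : (6:ℝ) ≤ x := le_trans (le_trans (le_max_left _ _) (le_max_right _ _)) hx
  have hxN : (N:ℝ) + 5 ≤ x := le_trans (le_max_left _ _) hx
  have hx50 : 50/ε + 3 ≤ x := le_trans (le_trans (le_max_right _ _) (le_max_right _ _)) hx
  set k := Nat.floor x with hk
  have hx0 : (0:ℝ) ≤ x := by linarith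
  have hkle : (k:ℝ) ≤ x := Nat.floor_le hx0
  have hklt : x < (k:ℝ) + 1 := Nat.lt_floor_add_one x
  have hk5 : 5 ≤ k := by
    have : (5:ℝ) < (k:ℝ) + 1 := by linarith
    have : (5:ℕ) < k + 1 := by exact_mod_cast this
    omega
  obtain ⟨m, hm⟩ : ∃ m, k = m + 2 := ⟨k - 2, by omega⟩
  have hmcast : (k:ℝ) = (m:ℝ) + 2 := by rw [hm]; push_cast; ring
  have hm3 : 3 ≤ m := by omega
  have h1 : (m:ℝ) + 2 ≤ x := by rw [← hmcast]; exact hkle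
  have h2 : x < (m:ℝ) + 3 := by rw [show (m:ℝ)+3 = (m:ℝ)+2+1 by ring, ← hmcast]; exact hklt
  obtain ⟨hlow, hupp⟩ := gamma_interp m h1 h2
  have hn4 : (4:ℝ) ≤ (m:ℝ) + 1 := by
    have : (3:ℝ) ≤ (m:ℝ) := by exact_mod_cast hm3
    linarith
  have hest := key_est (x := x) ((m:ℝ)+1) (Real.log (m+1).factorial) (Real.log (Real.Gamma x))
    hn4 (by linarith) (by linarith)
    (by rw [show (m:ℝ)+1+1 = (m:ℝ)+2 by ring]; exact hlow)
    (by rw [show (m:ℝ)+1+1 = (m:ℝ)+2 by ring]; exact hupp)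
  -- m+1 ≥ N
  have hmN : N ≤ m + 1 := by
    have : (N:ℝ) ≤ (m:ℝ) + 1 := by linarith
    exact_mod_cast this
  have hd := hN (m+1) hmN
  -- 25/(m+1) ≤ ε/2
  have h50 : 50/ε ≤ (m:ℝ) + 1 := by linarith
  have heps : 25 / ((m:ℝ)+1) ≤ ε/2 := by
    rw [div_le_iff₀ (by linarith : (0:ℝ) < (m:ℝ)+1)]
    have h := mul_le_mul_of_nonneg_left h50 hε.le
    rw [mul_div_cancel₀ _ hε.ne'] at h
    nlinarith
  rw [Real.dist_eq] at hd ⊢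
  have hdm : Real.log (m+1).factorial - (((m:ℝ)+1) + 1/2) * Real.log ((m:ℝ)+1) + ((m:ℝ)+1)
      = Real.log (Nat.factorial (m+1)) - ((((m+1:ℕ)):ℝ) + 1/2) * Real.log ((m+1:ℕ):ℝ) + ((m+1:ℕ):ℝ) := by
    push_cast; ring
  calc |Real.log (Real.Gamma x) - ((x - 1/2) * Real.log x - x) - 1/2 * Real.log (2*Real.pi)|
      ≤ |(Real.log (Real.Gamma x) - ((x - 1/2) * Real.log x - x)) -
          (Real.log (m+1).factorial - (((m:ℝ)+1) + 1/2) * Real.log ((m:ℝ)+1) + ((m:ℝ)+1))|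
        + |(Real.log (m+1).factorial - (((m:ℝ)+1) + 1/2) * Real.log ((m:ℝ)+1) + ((m:ℝ)+1))
            - 1/2 * Real.log (2*Real.pi)| := by
        exact abs_sub_le _ _ _
  _ < ε/2 + ε/2 := by
        apply add_lt_add_of_le_of_lt (le_trans hest heps)
        rw [hdm]
        convert hd using 3 <;> norm_num
  _ = ε := by ring

lemma Kfun_pos {x : ℝ} (hx : 0 < x) : 0 < Kfun x := by
  have h1 : 0 < Real.Gamma (x + 3/2) := Real.Gamma_pos_of_pos (by linarith)
  have h2 : 0 < Real.sqrt (2*Real.pi) := Real.sqrt_pos.mpr (by positivity)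
  have h3 : 0 < x ^ (x+1) := Real.rpow_pos_of_pos hx _
  unfold Kfun
  positivity

lemma logK_eq {x : ℝ} (hx : 0 < x) : Real.log (Kfun x)
    = 1/2 * Real.log (2*Real.pi) + 3/2
      - (Real.log (Real.Gamma (x + 3/2)) - ((x + 3/2 - 1/2) * Real.log (x + 3/2) - (x + 3/2)))
      - ((x+1) * (Real.log (x + 3/2) - Real.log x)) := by
  have h1 : 0 < Real.Gamma (x + 3/2) := Real.Gamma_pos_of_pos (by linarith)
  have h2 : 0 < Real.sqrt (2*Real.pi) := Real.sqrt_pos.mpr (by positivity)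
  have h3 : 0 < x ^ (x+1) := Real.rpow_pos_of_pos hx _
  unfold Kfun
  rw [Real.log_div (by positivity) (by positivity), Real.log_mul h2.ne' h3.ne',
    Real.log_mul (Real.exp_ne_zero x) h1.ne', Real.log_rpow hx, Real.log_exp,
    Real.log_sqrt (by positivity)]
  ring

lemma part1 : Tendsto Kfun atTop (nhds 1) := by
  have hG : Tendsto (fun x : ℝ => Real.log (Real.Gamma (x + 3/2))
      - ((x + 3/2 - 1/2) * Real.log (x + 3/2) - (x + 3/2))) atTop
      (nhds ((1/2) * Real.log (2*Real.pi))) := by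
    have := E_tendsto.comp (tendsto_atTop_add_const_right atTop (3/2 : ℝ) tendsto_id)
    exact this
  have hP : Tendsto (fun x : ℝ => (x+1) * (Real.log (x + 3/2) - Real.log x)) atTop
      (nhds (3/2)) := by
    have base1 := Real.tendsto_mul_log_one_add_div_atTop (3/2 : ℝ)
    have hfrac : Tendsto (fun x : ℝ => 1 + (3/2)/x) atTop (nhds 1) := by
      have : Tendsto (fun x : ℝ => (3/2)/x) atTop (nhds 0) :=
        tendsto_const_nhds.div_atTop tendsto_id
      simpa using tendsto_const_nhds.add this
    have base2 : Tendsto (fun x : ℝ => Real.log (1 + (3/2)/x)) atTop (nhds 0) := by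
      have := ((Real.continuousAt_log one_ne_zero).tendsto).comp hfrac
      simpa [Function.comp_def] using this
    have hsum := base1.add base2
    rw [show (3/2 : ℝ) + 0 = 3/2 by ring] at hsum
    apply hsum.congr'
    filter_upwards [eventually_gt_atTop (0:ℝ)] with x hx
    have hlg : Real.log (x + 3/2) - Real.log x = Real.log (1 + (3/2)/x) := by
      rw [show x + 3/2 = x * (1 + (3/2)/x) by field_simp,
        Real.log_mul hx.ne' (by positivity)]
      ring
    rw [hlg]; ring
  have hlog0 : Tendsto (fun x : ℝ => Real.log (Kfun x)) atTop (nhds 0) := by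
    have comb := ((tendsto_const_nhds.sub hG).sub hP :
      Tendsto (fun x : ℝ => (1/2 * Real.log (2*Real.pi) + 3/2
        - (Real.log (Real.Gamma (x + 3/2)) - ((x + 3/2 - 1/2) * Real.log (x + 3/2) - (x + 3/2)))
        - ((x+1) * (Real.log (x + 3/2) - Real.log x)))) atTop
        (nhds (1/2 * Real.log (2*Real.pi) + 3/2 - (1/2) * Real.log (2*Real.pi) - 3/2)))
    rw [show 1/2 * Real.log (2*Real.pi) + 3/2 - (1/2) * Real.log (2*Real.pi) - 3/2 = 0 by ring]
      at comb
    apply comb.congr'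
    filter_upwards [eventually_gt_atTop (0:ℝ)] with x hx
    exact (logK_eq hx).symm
  have := (Real.continuous_exp.tendsto 0).comp hlog0
  rw [Real.exp_zero] at this
  apply this.congr'
  filter_upwards [eventually_gt_atTop (0:ℝ)] with x hx
  exact Real.exp_log (Kfun_pos hx)

lemma logK_eq' {x : ℝ} (hx : 0 < x) : Real.log (Kfun x)
    = 1/2 * Real.log (2*Real.pi) + (x+1) * Real.log x - x - Real.log (Real.Gamma (x + 3/2)) := by
  have h1 : 0 < Real.Gamma (x + 3/2) := Real.Gamma_pos_of_pos (by linarith)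
  have h2 : 0 < Real.sqrt (2*Real.pi) := Real.sqrt_pos.mpr (by positivity)
  have h3 : 0 < x ^ (x+1) := Real.rpow_pos_of_pos hx _
  unfold Kfun
  rw [Real.log_div (by positivity) (by positivity), Real.log_mul h2.ne' h3.ne',
    Real.log_mul (Real.exp_ne_zero x) h1.ne', Real.log_rpow hx, Real.log_exp,
    Real.log_sqrt (by positivity)]
  ring

lemma ratio_eq {x : ℝ} (hx : 2 ≤ x) : Kfun (x-1) / Kfun x
    = Real.exp (1 + Real.log (1 + 1/(2*x)) + x * Real.log (1 - 1/x)) := by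
  have hx0 : (0:ℝ) < x := by linarith
  have hx1 : (0:ℝ) < x - 1 := by linarith
  have hxh : (0:ℝ) < x + 1/2 := by linarith
  have hG : 0 < Real.Gamma (x + 1/2) := Real.Gamma_pos_of_pos (by linarith)
  have hrw : Kfun (x-1) / Kfun x
      = Real.exp (Real.log (Kfun (x-1)) - Real.log (Kfun x)) := by
    rw [Real.exp_sub, Real.exp_log (Kfun_pos hx1), Real.exp_log (Kfun_pos hx0)]
  rw [hrw]
  congr 1
  rw [logK_eq' hx1, logK_eq' hx0]
  rw [show x - 1 + 3/2 = (x + 1/2) by ring]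
  have hGam : Real.log (Real.Gamma (x + 3/2))
      = Real.log (x + 1/2) + Real.log (Real.Gamma (x + 1/2)) := by
    rw [show x + 3/2 = (x + 1/2) + 1 by ring, Real.Gamma_add_one hxh.ne',
      Real.log_mul hxh.ne' hG.ne']
  rw [hGam]
  have hl1 : Real.log (x + 1/2) = Real.log x + Real.log (1 + 1/(2*x)) := by
    rw [show x + 1/2 = x * (1 + 1/(2*x)) by field_simp,
      Real.log_mul hx0.ne' (by positivity)]
  have hl2 : Real.log (x - 1) = Real.log x + Real.log (1 - 1/x) := by
    rw [show x - 1 = x * (1 - 1/x) by field_simp,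
      Real.log_mul hx0.ne' (by intro h; rw [sub_eq_zero] at h; field_simp at h; linarith)]
  rw [hl1, hl2]
  ring

lemma r_bound {x : ℝ} (hx : 2 ≤ x) :
    |1 + Real.log (1 + 1/(2*x)) + x * Real.log (1 - 1/x)| ≤ 3 / x^2 := by
  have hx0 : (0:ℝ) < x := by linarith
  set u : ℝ := 1/(2*x) with hu
  set v : ℝ := 1/x with hv
  have hu0 : 0 < u := by positivity
  have hu4 : u ≤ 1/4 := by rw [hu, div_le_div_iff₀ (by linarith) (by norm_num)]; linarith
  have hv0 : 0 < v := by positivity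
  have hv2 : v ≤ 1/2 := by rw [hv, div_le_div_iff₀ hx0 (by norm_num)]; linarith
  -- |log(1+u) - u| ≤ 2u²
  have hbu : |Real.log (1 + u) - u| ≤ 2 * u^2 := by
    have habs := Real.abs_log_sub_add_sum_range_le (x := -u)
      (by rw [abs_neg, abs_of_nonneg hu0.le]; linarith) 1
    rw [abs_neg, abs_of_nonneg hu0.le] at habs
    simp only [Finset.sum_range_one] at habs
    norm_num at habs
    have h2 : u^2 / (1 - u) ≤ 2 * u^2 := by
      rw [div_le_iff₀ (by linarith)]; nlinarith
    calc |Real.log (1+u) - u| = |(-u) + Real.log (1+u)| := by rw [neg_add_eq_sub]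
    _ ≤ u^2/(1-u) := by
        convert habs using 2 <;> ring_nf
    _ ≤ 2*u^2 := h2
  -- |log(1-v) + v + v²/2| ≤ 2v³
  have hbv : |Real.log (1 - v) + v + v^2/2| ≤ 2 * v^3 := by
    have habs := Real.abs_log_sub_add_sum_range_le (x := v)
      (by rw [abs_of_nonneg hv0.le]; linarith) 2
    rw [abs_of_nonneg hv0.le] at habs
    have hsum : ∑ i ∈ Finset.range 2, v^(i+1)/((i:ℝ)+1) = v + v^2/2 := by
      norm_num [Finset.sum_range_succ]
    rw [hsum] at habs
    have h2 : v^3 / (1 - v) ≤ 2 * v^3 := by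
      rw [div_le_iff₀ (by linarith)]
      nlinarith [mul_nonneg (pow_nonneg hv0.le 3) (by linarith : (0:ℝ) ≤ 1 - 2*v)]
    calc |Real.log (1-v) + v + v^2/2| = |v + v^2/2 + Real.log (1-v)| := by ring_nf
    _ ≤ v^3/(1-v) := by convert habs using 2 <;> ring_nf
    _ ≤ 2*v^3 := h2
  -- combine
  have hkey : 1 + Real.log (1 + u) + x * Real.log (1 - v)
      = (Real.log (1+u) - u) + x * (Real.log (1-v) + v + v^2/2) := by
    have h1 : x * v = 1 := by rw [hv]; field_simp
    have h2 : x * (v^2/2) = u := by rw [hv, hu]; field_simp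
    nlinarith [h1, h2]
  rw [hkey]
  have hxb : |x * (Real.log (1-v) + v + v^2/2)| ≤ 2/x^2 := by
    rw [abs_mul, abs_of_pos hx0]
    calc x * |Real.log (1-v) + v + v^2/2| ≤ x * (2*v^3) :=
      mul_le_mul_of_nonneg_left hbv hx0.le
    _ = 2/x^2 := by rw [hv]; field_simp
  have hub : 2 * u^2 = 1/(2*x^2) := by
    rw [hu]; field_simp
  calc |(Real.log (1+u) - u) + x * (Real.log (1-v) + v + v^2/2)|
      ≤ |Real.log (1+u) - u| + |x * (Real.log (1-v) + v + v^2/2)| := abs_add_le _ _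
  _ ≤ 2*u^2 + 2/x^2 := add_le_add hbu hxb
  _ ≤ 1/(2*x^2) + 2/x^2 := by linarith
  _ ≤ 3/x^2 := by
      have e1 : 1/(2*x^2) = (1/2)*(1/x^2) := by ring
      have e2 : (2:ℝ)/x^2 = 2*(1/x^2) := by ring
      have e3 : (3:ℝ)/x^2 = 3*(1/x^2) := by ring
      rw [e1, e2, e3]
      have : (0:ℝ) ≤ 1/x^2 := by positivity
      linarith

lemma part2 : (fun x : ℝ => Kfun (x - 1) / Kfun x - 1) =O[atTop] fun x : ℝ => x ^ (-(2 : ℝ)) := by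
  rw [isBigO_iff]
  refine ⟨6, ?_⟩
  filter_upwards [eventually_ge_atTop (2:ℝ)] with x hx
  have hx0 : (0:ℝ) < x := by linarith
  have hx2 : (0:ℝ) < x^2 := by positivity
  have hr := r_bound hx
  have h34 : 3/x^2 ≤ 1 := by
    rw [div_le_one hx2]; nlinarith
  have hr1 : |1 + Real.log (1 + 1/(2*x)) + x * Real.log (1 - 1/x)| ≤ 1 := le_trans hr h34
  have hexp := Real.abs_exp_sub_one_le hr1
  rw [Real.norm_eq_abs, Real.norm_eq_abs, ratio_eq hx]
  have hrpow : |x ^ (-(2:ℝ))| = 1/x^2 := by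
    rw [Real.rpow_neg hx0.le, abs_of_pos (by positivity)]
    rw [show ((2:ℝ)) = ((2:ℕ):ℝ) by norm_num, Real.rpow_natCast]
    rw [one_div]
  rw [hrpow]
  calc |Real.exp (1 + Real.log (1 + 1/(2*x)) + x * Real.log (1 - 1/x)) - 1|
      ≤ 2 * |1 + Real.log (1 + 1/(2*x)) + x * Real.log (1 - 1/x)| := hexp
  _ ≤ 2 * (3/x^2) := by linarith
  _ = 6 * (1/x^2) := by ring

end Aux

/-- `K(x) → 1` as `x → ∞`, and `K(x-1)/K(x) = 1 + O(x^{-2})`. -/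
theorem stmt_10 :
    Tendsto Kfun atTop (nhds 1) ∧
    (fun x : ℝ => Kfun (x - 1) / Kfun x - 1) =O[atTop] fun x : ℝ => x ^ (-(2 : ℝ)) := by
  exact ⟨part1, part2⟩
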